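/- For any pair of old nodes i, j of G viewed inside R_q(G), the effective resistance satisfies r̃_{ij} = (2/(q+2))·r_{ij}, where r̃ denotes resistance distance in R_q(G) and r denotes resistance distance in G. -/

import Mathlib

open scoped Classical

/-- The `q`-triangulation graph `R_q(G)`: for each edge `e` of `G` we add `q` new
nodes (indexed by `G.edgeSet × Fin q`), each adjacent exactly to the two endpoints of `e`. -/
noncomputable def qTriangulation {V : Type} (G : SimpleGraph V) (q : ℕ) :
    SimpleGraph (V ⊕ (G.edgeSet × Fin q)) where
  Adj x y :=
    match x, y with
    | Sum.inl a, Sum.inl b => G.Adj a b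
    | Sum.inl a, Sum.inr p => a ∈ (p.1 : Sym2 V)
    | Sum.inr p, Sum.inl b => b ∈ (p.1 : Sym2 V)
    | Sum.inr _, Sum.inr _ => False
  symm := ⟨by
    rintro (a | p) (b | p') h
    · exact h.symm
    · exact h
    · exact h
    · exact h.elim⟩
  loopless := ⟨by
    rintro (a | p) h
    · exact G.irrefl h
    · exact h⟩

/-- The Laplacian of a finite simple graph over `ℝ` is Hermitian. -/
lemma lap_isHermitian {V : Type} [Fintype V] (G : SimpleGraph V) :
    (G.lapMatrix ℝ).IsHermitian := by
  have h := G.isSymm_lapMatrix (R := ℝ)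
  unfold Matrix.IsHermitian Matrix.conjTranspose
  rw [show (G.lapMatrix ℝ).transpose = G.lapMatrix ℝ from h]
  ext i j
  simp

/-- The Moore–Penrose pseudoinverse `L⁺` of the graph Laplacian, obtained from the spectral
theorem by inverting the nonzero eigenvalues (in `ℝ`, `0⁻¹ = 0`). -/
noncomputable def lapPinv {V : Type} [Fintype V] [DecidableEq V] (G : SimpleGraph V) :
    Matrix V V ℝ :=
  ((lap_isHermitian G).eigenvectorUnitary : Matrix V V ℝ) *
    Matrix.diagonal (fun i => ((lap_isHermitian G).eigenvalues i)⁻¹) *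
    (star ((lap_isHermitian G).eigenvectorUnitary : Matrix V V ℝ))

/-- Resistance distance `r_{ij} = (e_i - e_j)ᵀ L⁺ (e_i - e_j)`. -/
noncomputable def resistance {V : Type} [Fintype V] [DecidableEq V] (G : SimpleGraph V)
    (i j : V) : ℝ :=
  dotProduct ((Pi.single i 1 - Pi.single j 1 : V → ℝ))
    (Matrix.mulVec (lapPinv G) (Pi.single i 1 - Pi.single j 1 : V → ℝ))

section Pinv

open Matrix Finset

variable {V : Type} [Fintype V] [instd : DecidableEq V]

private lemma diag_conj_mul (U : Matrix V V ℝ) (hU : star U * U = 1) (d e : V → ℝ) :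
    (U * Matrix.diagonal d * star U) * (U * Matrix.diagonal e * star U)
      = U * Matrix.diagonal (fun i => d i * e i) * star U := by
  simp only [Matrix.mul_assoc]
  rw [← Matrix.mul_assoc (star U) U (Matrix.diagonal e * star U), hU, Matrix.one_mul,
    ← Matrix.mul_assoc (Matrix.diagonal d) (Matrix.diagonal e) (star U),
    Matrix.diagonal_mul_diagonal]

lemma lap_sq_mul_lapPinv (G : SimpleGraph V) :
    G.lapMatrix ℝ * G.lapMatrix ℝ * lapPinv G = G.lapMatrix ℝ := by
  have hd : instd = fun a b => Classical.propDecidable (a = b) := Subsingleton.elim _ _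
  subst hd
  have hH := lap_isHermitian G
  have hUU : star ((hH.eigenvectorUnitary : Matrix V V ℝ)) * (hH.eigenvectorUnitary : Matrix V V ℝ) = 1 :=
    Unitary.star_mul_self_of_mem hH.eigenvectorUnitary.2
  have hspec : G.lapMatrix ℝ = (hH.eigenvectorUnitary : Matrix V V ℝ) *
      Matrix.diagonal hH.eigenvalues * star ((hH.eigenvectorUnitary : Matrix V V ℝ)) := by
    have h := hH.spectral_theorem
    rw [RCLike.ofReal_real_eq_id, Function.id_comp] at h
    exact h
  have hpinv : lapPinv G = (hH.eigenvectorUnitary : Matrix V V ℝ) *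
      Matrix.diagonal (fun i => (hH.eigenvalues i)⁻¹) *
      star ((hH.eigenvectorUnitary : Matrix V V ℝ)) := rfl
  rw [hspec, hpinv, diag_conj_mul _ hUU, diag_conj_mul _ hUU]
  congr 2
  funext k
  rcases eq_or_ne (hH.eigenvalues k) 0 with h | h
  · simp [h]
  · field_simp

lemma lap_mulVec_lapPinv_mulVec (G : SimpleGraph V) (hG : G.Connected) (x : V → ℝ)
    (hx : ∑ a, x a = 0) : G.lapMatrix ℝ *ᵥ (lapPinv G *ᵥ x) = x := by
  set L := G.lapMatrix ℝ with hLdef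
  set w : V → ℝ := L *ᵥ (lapPinv G *ᵥ x) - x with hw
  have hLw : L *ᵥ w = 0 := by
    have h1 : L *ᵥ (L *ᵥ (lapPinv G *ᵥ x)) = L *ᵥ x := by
      rw [Matrix.mulVec_mulVec, Matrix.mulVec_mulVec, hLdef, lap_sq_mul_lapPinv]
    rw [hw, Matrix.mulVec_sub, h1, sub_self]
  have hconst : ∀ a b : V, w a = w b := by
    have h := (G.lapMatrix_mulVec_eq_zero_iff_forall_reachable (x := w)).mp
      hLw
    exact fun a b => h a b (hG.preconnected a b)
  have hcolsum : ∀ b : V, ∑ a, L a b = 0 := by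
    intro b
    have h1 : L *ᵥ (fun _ => (1:ℝ)) = 0 := G.lapMatrix_mulVec_const_eq_zero
    have h2 := congrFun h1 b
    simp only [Matrix.mulVec, dotProduct, mul_one, Pi.zero_apply] at h2
    have hsymm : ∀ a : V, L a b = L b a := by
      intro a
      have h3 : Lᵀ = L := G.isSymm_lapMatrix (R := ℝ)
      calc L a b = Lᵀ b a := rfl
        _ = L b a := by rw [h3]
    rw [Finset.sum_congr rfl fun a _ => hsymm a]
    exact h2
  have hsumLy : ∀ y : V → ℝ, ∑ a, (L *ᵥ y) a = 0 := by
    intro y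
    calc ∑ a, (L *ᵥ y) a = ∑ a, ∑ b, L a b * y b := rfl
      _ = ∑ b, (∑ a, L a b) * y b := by
          rw [Finset.sum_comm]
          exact Finset.sum_congr rfl fun b _ => (Finset.sum_mul _ _ _).symm
      _ = 0 := by simp [hcolsum]
  have hsum : ∑ a, w a = 0 := by
    simp only [hw, Pi.sub_apply, Finset.sum_sub_distrib, hsumLy, hx, sub_zero]
  have hV : Nonempty V := hG.nonempty
  obtain ⟨a0⟩ := id hV
  have hcard : (Fintype.card V : ℝ) ≠ 0 := by exact_mod_cast Fintype.card_ne_zero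
  have hmul : (Fintype.card V : ℝ) * w a0 = 0 := by
    rw [← hsum, Finset.sum_congr rfl fun a _ => hconst a a0]
    simp [Finset.sum_const, mul_comm]
  have hw0 : w a0 = 0 := by
    rcases mul_eq_zero.mp hmul with h | h
    · exact absurd h hcard
    · exact h
  have hzero : w = 0 := funext fun a => by rw [Pi.zero_apply, hconst a a0, hw0]
  exact sub_eq_zero.mp hzero

lemma dot_lapPinv_eq (G : SimpleGraph V) (hG : G.Connected) (x v : V → ℝ)
    (hx : ∑ a, x a = 0) (hv : G.lapMatrix ℝ *ᵥ v = x) :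
    x ⬝ᵥ (lapPinv G *ᵥ x) = x ⬝ᵥ v := by
  set u := lapPinv G *ᵥ x with hu
  have hC : G.lapMatrix ℝ *ᵥ u = x := lap_mulVec_lapPinv_mulVec G hG x hx
  have hsymm : (G.lapMatrix ℝ)ᵀ = G.lapMatrix ℝ := G.isSymm_lapMatrix (R := ℝ)
  have hvm : u ᵥ* G.lapMatrix ℝ = x := by
    calc u ᵥ* G.lapMatrix ℝ = u ᵥ* (G.lapMatrix ℝ)ᵀ := by rw [hsymm]
      _ = G.lapMatrix ℝ *ᵥ u := Matrix.vecMul_transpose _ _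
      _ = x := hC
  calc x ⬝ᵥ u = (G.lapMatrix ℝ *ᵥ v) ⬝ᵥ u := by rw [hv]
    _ = u ⬝ᵥ (G.lapMatrix ℝ *ᵥ v) := dotProduct_comm _ _
    _ = (u ᵥ* G.lapMatrix ℝ) ⬝ᵥ v := Matrix.dotProduct_mulVec _ _ _
    _ = x ⬝ᵥ v := by rw [hvm]

end Pinv

open Matrix Finset

lemma lap_mulVec_ite {W : Type} [Fintype W] [DecidableEq W] (H : SimpleGraph W)
    (f : W → ℝ) (a : W) :
    (H.lapMatrix ℝ *ᵥ f) a = ∑ b, if H.Adj a b then f a - f b else 0 := by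
  rw [SimpleGraph.lapMatrix_mulVec_apply, SimpleGraph.degree_eq_sum_if_adj]
  have h1 : ∑ u ∈ H.neighborFinset a, f u = ∑ b, if H.Adj a b then f b else 0 := by
    rw [← Finset.sum_filter]
    congr 1
    ext b
    simp [SimpleGraph.mem_neighborFinset]
  rw [h1, Finset.sum_mul, ← Finset.sum_sub_distrib]
  congr 1
  funext b
  split <;> simp

section Main

variable {V : Type} [Fintype V] [DecidableEq V] (G : SimpleGraph V)

lemma qTri_adj_inl_inl (q : ℕ) (a b : V) :
    (qTriangulation G q).Adj (Sum.inl a) (Sum.inl b) ↔ G.Adj a b := Iff.rfl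

lemma qTri_adj_inl_inr (q : ℕ) (a : V) (p : G.edgeSet × Fin q) :
    (qTriangulation G q).Adj (Sum.inl a) (Sum.inr p) ↔ a ∈ (p.1 : Sym2 V) := Iff.rfl

lemma qTri_adj_inr_inl (q : ℕ) (p : G.edgeSet × Fin q) (b : V) :
    (qTriangulation G q).Adj (Sum.inr p) (Sum.inl b) ↔ b ∈ (p.1 : Sym2 V) := Iff.rfl

lemma qTri_adj_inr_inr (q : ℕ) (p p' : G.edgeSet × Fin q) :
    ¬ (qTriangulation G q).Adj (Sum.inr p) (Sum.inr p') := fun h => h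

lemma qTri_connected (hG : G.Connected) (q : ℕ) : (qTriangulation G q).Connected := by
  have hhom : ∀ a b : V, G.Reachable a b →
      (qTriangulation G q).Reachable (Sum.inl a) (Sum.inl b) := by
    intro a b h
    exact h.map (⟨Sum.inl, fun hadj => hadj⟩ : G →g qTriangulation G q)
  have hto : ∀ z : V ⊕ (G.edgeSet × Fin q),
      ∃ a : V, (qTriangulation G q).Reachable z (Sum.inl a) := by
    rintro (a | p)
    · exact ⟨a, SimpleGraph.Reachable.refl _⟩
    · refine ⟨(p.1 : Sym2 V).out.1, SimpleGraph.Adj.reachable ?_⟩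
      exact Sym2.out_fst_mem _
  haveI : Nonempty (V ⊕ (G.edgeSet × Fin q)) := ⟨Sum.inl hG.nonempty.some⟩
  refine ⟨fun u w => ?_⟩
  obtain ⟨a, hu⟩ := hto u
  obtain ⟨b, hw⟩ := hto w
  exact hu.trans ((hhom a b (hG.preconnected a b)).trans hw.symm)

lemma single_diff_dot {W : Type} [Fintype W] [DecidableEq W] (i j : W) (w : W → ℝ) :
    ((Pi.single i 1 - Pi.single j 1 : W → ℝ)) ⬝ᵥ w = w i - w j := by
  simp [dotProduct, Pi.sub_apply, sub_mul, Pi.single_apply, Finset.sum_sub_distrib,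
    ite_mul]

lemma single_diff_sum {W : Type} [Fintype W] [DecidableEq W] (i j : W) :
    ∑ a, (Pi.single i 1 - Pi.single j 1 : W → ℝ) a = 0 := by
  simp [Pi.sub_apply, Finset.sum_sub_distrib, Pi.single_apply]

lemma sum_edges_incident (a : V) (F : Sym2 V → ℝ) :
    ∑ e : G.edgeSet, (if a ∈ (e : Sym2 V) then F ↑e else 0)
      = ∑ b : V, (if G.Adj a b then F s(a, b) else 0) := by
  rw [← Finset.sum_subtype G.edgeFinset (fun e => SimpleGraph.mem_edgeFinset)
    (fun s => if a ∈ s then F s else 0), ← Finset.sum_filter, ← Finset.sum_filter]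
  refine Finset.sum_bij' (fun e he => Sym2.Mem.other' ((Finset.mem_filter.mp he).2))
    (fun b _ => s(a, b)) ?_ ?_ ?_ ?_ ?_
  · intro e he
    have hmem := (Finset.mem_filter.mp he).2
    have hE : e ∈ G.edgeSet := SimpleGraph.mem_edgeFinset.mp (Finset.mem_filter.mp he).1
    have hspec := Sym2.other_spec' hmem
    rw [Finset.mem_filter]
    refine ⟨Finset.mem_univ _, ?_⟩
    rw [← hspec] at hE
    exact G.mem_edgeSet.mp hE
  · intro b hb
    have hadj : G.Adj a b := (Finset.mem_filter.mp hb).2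
    rw [Finset.mem_filter]
    exact ⟨SimpleGraph.mem_edgeFinset.mpr (G.mem_edgeSet.mpr hadj), Sym2.mem_mk_left a b⟩
  · intro e he
    exact Sym2.other_spec' ((Finset.mem_filter.mp he).2)
  · intro b hb
    have hadj : G.Adj a b := (Finset.mem_filter.mp hb).2
    have hne : a ≠ b := G.ne_of_adj hadj
    have h1 := Sym2.other_spec' (Sym2.mem_mk_left a b)
    rcases Sym2.eq_iff.mp h1 with ⟨_, h2⟩ | ⟨h2, _⟩
    · exact h2
    · exact absurd h2 hne
  · intro e he
    rw [Sym2.other_spec' ((Finset.mem_filter.mp he).2)]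

/-- For old nodes `i, j` of `G` viewed inside `R_q(G)`:
`r̃_{ij} = (2/(q+2))·r_{ij}`. -/
theorem resistance_qTriangulation_old_old {V : Type} [Fintype V] [DecidableEq V]
    (G : SimpleGraph V) (hG : G.Connected) (q : ℕ) (hq : 0 < q) (i j : V) :
    resistance (qTriangulation G q) (Sum.inl i) (Sum.inl j)
      = 2 / ((q : ℝ) + 2) * resistance G i j := by
  simp only [resistance]
  set x : V → ℝ := Pi.single i 1 - Pi.single j 1 with hxdef
  set X : V ⊕ (G.edgeSet × Fin q) → ℝ :=
    Pi.single (Sum.inl i) 1 - Pi.single (Sum.inl j) 1 with hXdef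
  set v : V → ℝ := lapPinv G *ᵥ x with hvdef
  have hxsum : ∑ a, x a = 0 := single_diff_sum i j
  have hXsum : ∑ z, X z = 0 := single_diff_sum _ _
  have hLv : G.lapMatrix ℝ *ᵥ v = x := lap_mulVec_lapPinv_mulVec G hG x hxsum
  set hfun : Sym2 V → ℝ := Sym2.lift ⟨fun a b => (v a + v b) / 2, fun a b => by ring⟩
    with hfundef
  set f : V ⊕ (G.edgeSet × Fin q) → ℝ := Sum.elim v (fun p => hfun p.1) with hfdef
  set c : ℝ := 2 / ((q : ℝ) + 2) with hcdef
  have hq2 : ((q : ℝ) + 2) ≠ 0 := by positivity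
  have hX_inl : ∀ a : V, X (Sum.inl a) = x a := by
    intro a
    simp [hXdef, hxdef, Pi.single_apply, Sum.inl.injEq]
  have hX_inr : ∀ p : G.edgeSet × Fin q, X (Sum.inr p) = 0 := by
    intro p
    simp [hXdef, Pi.single_apply]
  -- the key harmonicity computation
  have key : ∀ z, ((qTriangulation G q).lapMatrix ℝ *ᵥ f) z = (((q : ℝ) + 2) / 2) * X z := by
    rintro (a | p)
    · rw [lap_mulVec_ite, Fintype.sum_sum_type]
      have h1 : ∑ b : V,
          (if (qTriangulation G q).Adj (Sum.inl a) (Sum.inl b) then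
            f (Sum.inl a) - f (Sum.inl b) else 0)
          = ∑ b : V, (if G.Adj a b then v a - v b else 0) := by
        apply Finset.sum_congr rfl
        intro b _
        simp [qTri_adj_inl_inl, hfdef]
      have hS : ∑ b : V, (if G.Adj a b then v a - v b else 0) = x a := by
        rw [← lap_mulVec_ite G v a, hLv]
      have h2 : ∑ p : G.edgeSet × Fin q,
          (if (qTriangulation G q).Adj (Sum.inl a) (Sum.inr p) then
            f (Sum.inl a) - f (Sum.inr p) else 0)
          = (q : ℝ) * ∑ e : G.edgeSet, (if a ∈ (e : Sym2 V) then v a - hfun ↑e else 0) := by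
        rw [Fintype.sum_prod_type]
        have : ∀ e : G.edgeSet, ∑ _k : Fin q,
            (if (qTriangulation G q).Adj (Sum.inl a) (Sum.inr (e, _k)) then
              f (Sum.inl a) - f (Sum.inr (e, _k)) else 0)
            = (q : ℝ) * (if a ∈ (e : Sym2 V) then v a - hfun ↑e else 0) := by
          intro e
          have hterm : ∀ k : Fin q,
              (if (qTriangulation G q).Adj (Sum.inl a) (Sum.inr (e, k)) then
                f (Sum.inl a) - f (Sum.inr (e, k)) else 0)
              = (if a ∈ (e : Sym2 V) then v a - hfun ↑e else 0) := by
            intro k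
            simp only [qTri_adj_inl_inr, hfdef, Sum.elim_inl, Sum.elim_inr]
          rw [Finset.sum_congr rfl fun k _ => hterm k, Finset.sum_const, Finset.card_univ,
            Fintype.card_fin, nsmul_eq_mul]
        rw [Finset.sum_congr rfl fun e _ => this e, ← Finset.mul_sum]
      have h3 : ∑ e : G.edgeSet, (if a ∈ (e : Sym2 V) then v a - hfun ↑e else 0)
          = x a / 2 := by
        rw [sum_edges_incident G a (fun s => v a - hfun s)]
        have : ∀ b : V, (if G.Adj a b then v a - hfun s(a, b) else 0)
            = (if G.Adj a b then v a - v b else 0) / 2 := by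
          intro b
          rw [hfundef, Sym2.lift_mk]
          split <;> ring
        rw [Finset.sum_congr rfl fun b _ => this b, ← Finset.sum_div, hS]
      rw [h1, hS, h2, h3, hX_inl]
      ring
    · rw [lap_mulVec_ite, Fintype.sum_sum_type, hX_inr, mul_zero]
      have h2 : ∑ p' : G.edgeSet × Fin q,
          (if (qTriangulation G q).Adj (Sum.inr p) (Sum.inr p') then
            f (Sum.inr p) - f (Sum.inr p') else 0) = 0 := by
        apply Finset.sum_eq_zero
        intro p' _
        rw [if_neg (qTri_adj_inr_inr G q p p')]
      rw [h2, add_zero]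
      obtain ⟨⟨a, b⟩, hab⟩ := Quot.exists_rep (p.1 : Sym2 V)
      have hab' : s(a, b) = (p.1 : Sym2 V) := hab
      have hE : ((p.1 : Sym2 V)) ∈ G.edgeSet := p.1.2
      have hadj : G.Adj a b := by
        rw [← hab'] at hE
        exact (SimpleGraph.mem_edgeSet G).mp hE
      have hne : a ≠ b := G.ne_of_adj hadj
      have h1 : ∀ b' : V, (if (qTriangulation G q).Adj (Sum.inr p) (Sum.inl b') then
            f (Sum.inr p) - f (Sum.inl b') else 0)
          = (if b' ∈ ({a, b} : Finset V) then hfun (p.1 : Sym2 V) - v b' else 0) := by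
        intro b'
        have hcond : (qTriangulation G q).Adj (Sum.inr p) (Sum.inl b')
            ↔ b' ∈ ({a, b} : Finset V) := by
          rw [qTri_adj_inr_inl, ← hab', Sym2.mem_iff]
          simp
        simp only [hfdef, Sum.elim_inl, Sum.elim_inr]
        split
        · rw [if_pos (hcond.mp (by assumption))]
        · rw [if_neg (fun h => (by assumption : ¬_) (hcond.mpr h))]
      rw [Finset.sum_congr rfl fun b' _ => h1 b', Finset.sum_ite_mem, Finset.univ_inter,
        Finset.sum_pair hne]
      have hval : hfun (p.1 : Sym2 V) = (v a + v b) / 2 := by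
        rw [← hab', hfundef, Sym2.lift_mk]
      rw [hval]
      ring
  have hc1 : c * (((q : ℝ) + 2) / 2) = 1 := by
    rw [hcdef]
    field_simp
  have hLcf : (qTriangulation G q).lapMatrix ℝ *ᵥ (c • f) = X := by
    rw [Matrix.mulVec_smul]
    funext z
    rw [Pi.smul_apply, key z, smul_eq_mul, ← mul_assoc, hc1, one_mul]
  have hconn := qTri_connected G hG q
  rw [dot_lapPinv_eq (qTriangulation G q) hconn X (c • f) hXsum hLcf]
  rw [hXdef, single_diff_dot]
  have hxv : x ⬝ᵥ v = v i - v j := by rw [hxdef, single_diff_dot]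
  rw [hxv]
  simp only [Pi.smul_apply, hfdef, Sum.elim_inl, smul_eq_mul]
  ring
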